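/- Let (G, V^∞, T, k) be an instance of OddMultiwayNodeCut where G is a directed acyclic graph and T ⊆ V^∞ ⊆ V(G), and let M ⊆ V(G) \ V^∞ be an odd multiway cut. If there exists a node v ∈ r_G(M) such that M does not contain any important v→T separator, then there exists another odd multiway cut M' ⊆ V(G) \ V^∞ with |M'| ≤ |M| such that r_G(M) ∪ f_G(M) ∪ M ⊆ r_G(M') ∪ f_G(M') ∪ M' and r_G(M) ⊊ r_G(M'). -/

import Mathlib

/-!
As `v ∈ r(M)`, `M` separates `v` from `T`; let `S₀ ⊆ M` be a smallest such separator inside `M`.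
It is inclusion-minimal and not important, hence dominated. Among the `v → T` separators whose
reach from `v` strictly exceeds that of `S₀`, choose `S` with the fewest vertices outside `M \ S₀`,
and put `M' = (M \ S₀) ∪ S`.

Minimality of `S₀` places `S₀ \ S` inside the set `R` of vertices reachable from `v` in
`G - S`, and nothing in `R` reaches `T` in `G - S`, let alone in `G - M'`. So a path avoiding `M'`
that meets `M` ends in `R`, hence not in `T`, while `R \ M' ⊆ r(M')`. This makes `M'` an odd
multiway cut with growing shadows, strictly so because `S₀ ⊄ S`. The choice of `S` keeps it
disjoint from `r(M)`: a vertex `u ∈ S ∩ r(M)` could be traded for the out-boundary of `R ∪ R_u`,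
where `R_u` is what `u` reaches in `G - (M ∪ S \ {u})`; this is a separator with fewer vertices
outside `M \ S₀`. Since `G` is acyclic, walks can stand in for paths throughout.
-/

/-- A (simple) directed path in the directed graph `G`, represented as a nonempty
list of pairwise distinct vertices in which every consecutive pair is an edge of `G`. -/
def IsPath {V : Type*} (G : V → V → Prop) (p : List V) : Prop :=
  p ≠ [] ∧ p.Chain' G ∧ p.Nodup

/-- `p` is a directed path from `u` to `v` in `G`. -/
def IsPathFrom {V : Type*} (G : V → V → Prop) (u v : V) (p : List V) : Prop :=
  IsPath G p ∧ p.head? = some u ∧ p.getLast? = some v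

/-- The length (number of edges) of a path, given as its list of vertices. -/
def pathLen {V : Type*} (p : List V) : ℕ := p.length - 1

/-- The list of directed edges traversed by a path. -/
def edgesOf {V : Type*} (p : List V) : List (V × V) := p.zip p.tail

/-- A directed graph is acyclic (a DAG) if no vertex lies on a directed cycle. -/
def Acyclic {V : Type*} (G : V → V → Prop) : Prop :=
  ∀ v, ¬ Relation.TransGen G v v

/-- The graph obtained from `G` by deleting the vertex set `M`. -/
def delV {V : Type*} (G : V → V → Prop) (M : Set V) : V → V → Prop :=
  fun a b => G a b ∧ a ∉ M ∧ b ∉ M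

/-- An odd multiway (node) cut for the instance `(G, Vinf, T)`: a set of
non-protected vertices meeting every odd `T`-path of `G`. -/
def OddMWC {V : Type*} (G : V → V → Prop) (Vinf T M : Set V) : Prop :=
  M ⊆ Vinfᶜ ∧
  ∀ u ∈ T, ∀ v ∈ T, ∀ p, IsPathFrom G u v p → Odd (pathLen p) → ∃ z ∈ p, z ∈ M

/-- The forward shadow of `M`: vertices `v ∉ M` such that every path from a
terminal to `v` in `G` intersects `M`. -/
def fShadow {V : Type*} (G : V → V → Prop) (T M : Set V) : Set V :=
  {v | v ∉ M ∧ ∀ t ∈ T, ∀ p, IsPathFrom G t v p → ∃ z ∈ p, z ∈ M}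

/-- The reverse shadow of `M`: vertices `v ∉ M` such that every path from `v`
to a terminal in `G` intersects `M`. -/
def rShadow {V : Type*} (G : V → V → Prop) (T M : Set V) : Set V :=
  {v | v ∉ M ∧ ∀ t ∈ T, ∀ p, IsPathFrom G v t p → ∃ z ∈ p, z ∈ M}

/-- `S` is an `X → Y` separator: a set of non-protected vertices whose deletion
destroys all paths from `X` to `Y`. -/
def IsSep {V : Type*} (G : V → V → Prop) (Vinf X Y S : Set V) : Prop :=
  Disjoint S Vinf ∧ ∀ x ∈ X, ∀ y ∈ Y, ¬ ∃ p, IsPathFrom (delV G S) x y p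

/-- The set of vertices reachable from `X` in `G`. -/
def Reach {V : Type*} (G : V → V → Prop) (X : Set V) : Set V :=
  {v | ∃ x ∈ X, ∃ p, IsPathFrom G x v p}

/-- The `X → Y` separator `S'` dominates the `X → Y` separator `S`. -/
def Dominates {V : Type*} (G : V → V → Prop) (Vinf X Y S' S : Set V) : Prop :=
  IsSep G Vinf X Y S' ∧ S'.ncard ≤ S.ncard ∧
    Reach (delV G S) X ⊂ Reach (delV G S') X

/-- An important `X → Y` separator: a minimal `X → Y` separator that is not
dominated by any other `X → Y` separator. -/
def ImportantSep {V : Type*} (G : V → V → Prop) (Vinf X Y S : Set V) : Prop :=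
  IsSep G Vinf X Y S ∧ (∀ S', S' ⊂ S → ¬ IsSep G Vinf X Y S') ∧
  ∀ S', IsSep G Vinf X Y S' → S' ≠ S → ¬ Dominates G Vinf X Y S' S

open Relation

theorem ncard_sdiff_union_le {α : Type*} [Finite α] {M S₀ S : Set α} (hS₀M : S₀ ⊆ M)
    (hS : (S \ (M \ S₀)).ncard ≤ S₀.ncard) : ((M \ S₀) ∪ S).ncard ≤ M.ncard := by
  have h₁ := Set.ncard_union_le (M \ S₀) (S \ (M \ S₀))
  rw [Set.union_sdiff_self] at h₁
  have h₂ := Set.ncard_sdiff hS₀M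
  have h₃ := Set.ncard_le_ncard hS₀M
  omega

section

variable {V : Type*} {G : V → V → Prop} {S S' : Set V} {a b x : V} {p : List V}

theorem IsPathFrom.mono {H : V → V → Prop} (hGH : G ≤ H)
    (h : IsPathFrom G a b p) : IsPathFrom H a b p :=
  ⟨⟨h.1.1, h.1.2.1.imp hGH, h.1.2.2⟩, h.2⟩

theorem IsPathFrom.reflTransGen_of_mem (h : IsPathFrom G a b p) (hx : x ∈ p) :
    ReflTransGen G x b := by
  obtain ⟨⟨-, hch, -⟩, -, hlast⟩ := h
  refine List.IsChain.backwards_induction (ReflTransGen G · b) p hch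
    (fun _ _ hxy hy => hy.head hxy) (fun hne => ?_) x hx
  rw [List.getLast?_eq_some_getLast hne, Option.some.injEq] at hlast
  rw [hlast]

theorem IsPathFrom.reflTransGen (h : IsPathFrom G a b p) : ReflTransGen G a b :=
  h.reflTransGen_of_mem (List.mem_of_mem_head? h.2.1)

theorem IsPathFrom.delV_of_forall_notMem (h : IsPathFrom G a b p) (hp : ∀ x ∈ p, x ∉ S) :
    IsPathFrom (delV G S) a b p :=
  ⟨⟨h.1.1, h.1.2.1.imp_of_mem_imp fun _ _ hx hy hxy => ⟨hxy, hp _ hx, hp _ hy⟩, h.1.2.2⟩, h.2⟩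

theorem IsPathFrom.notMem_of_delV (h : IsPathFrom (delV G S) a b p) (ha : a ∉ S) :
    ∀ x ∈ p, x ∉ S := by
  obtain ⟨⟨-, hch, -⟩, hhead, -⟩ := h
  refine List.IsChain.induction (· ∉ S) p hch (fun _ _ hxy _ => hxy.2.2) (fun hne => ?_)
  rw [List.head?_eq_some_head hne, Option.some.injEq] at hhead
  rwa [hhead]

theorem IsPathFrom.reflTransGen_delV_of_mem (h : IsPathFrom G a b p) (hp : ∀ x ∈ p, x ∉ S)
    (hx : x ∈ p) : ReflTransGen (delV G S) x b :=
  (h.delV_of_forall_notMem hp).reflTransGen_of_mem hx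

theorem Acyclic.exists_isPathFrom (hG : Acyclic G) (h : ReflTransGen G a b) :
    ∃ p, IsPathFrom G a b p := by
  obtain ⟨p, hne, hch, rfl, rfl⟩ := List.exists_isChain_ne_nil_of_relationReflTransGen h
  have hpw : p.Pairwise (TransGen G) := List.isChain_iff_pairwise.mp (hch.imp fun _ _ => .single)
  exact ⟨p, ⟨hne, hch, hpw.imp fun {x y} (hxy : TransGen G x y) (e : x = y) => hG y (e ▸ hxy)⟩,
    List.head?_eq_some_head hne, List.getLast?_eq_some_getLast hne⟩

theorem Acyclic.exists_isPathFrom_iff (hG : Acyclic G) :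
    (∃ p, IsPathFrom G a b p) ↔ ReflTransGen G a b :=
  ⟨fun ⟨_, hp⟩ => hp.reflTransGen, hG.exists_isPathFrom⟩

theorem acyclic_delV (hG : Acyclic G) (S : Set V) : Acyclic (delV G S) :=
  fun x h => hG x (h.lift id fun _ _ hab => hab.1)

theorem Acyclic.reach_singleton (hG : Acyclic G) (a : V) :
    Reach G {a} = {b | ReflTransGen G a b} := by
  ext b
  simp [Reach, hG.exists_isPathFrom_iff]

theorem Acyclic.exists_isPathFrom_avoiding_iff (hG : Acyclic G) :
    (∃ p, IsPathFrom G a b p ∧ ∀ x ∈ p, x ∉ S) ↔ a ∉ S ∧ ReflTransGen (delV G S) a b := by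
  refine ⟨fun ⟨p, hp, hpS⟩ => ⟨hpS a (List.mem_of_mem_head? hp.2.1),
    hp.reflTransGen_delV_of_mem hpS (List.mem_of_mem_head? hp.2.1)⟩, fun ⟨ha, h⟩ => ?_⟩
  obtain ⟨p, hp⟩ := (acyclic_delV hG S).exists_isPathFrom h
  exact ⟨p, hp.mono fun _ _ hxy => hxy.1, hp.notMem_of_delV ha⟩

theorem delV_anti (hSS' : S ⊆ S') : delV G S' ≤ delV G S :=
  fun _ _ hxy => ⟨hxy.1, fun hx => hxy.2.1 (hSS' hx), fun hy => hxy.2.2 (hSS' hy)⟩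

theorem reflTransGen_delV_anti (hSS' : S ⊆ S') (h : ReflTransGen (delV G S') a b) :
    ReflTransGen (delV G S) a b :=
  ReflTransGen.mono (delV_anti hSS') _ _ h

theorem notMem_of_reflTransGen_delV (h : ReflTransGen (delV G S) a b) (ha : a ∉ S) : b ∉ S := by
  rcases h.cases_tail with rfl | ⟨_, -, hcb⟩
  exacts [ha, hcb.2.2]

theorem notMem_of_reflTransGen_delV_left (h : ReflTransGen (delV G S) a b) (hb : b ∉ S) :
    a ∉ S := by
  rcases h.cases_head with rfl | ⟨_, hac, -⟩
  exacts [hb, hac.2.1]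

theorem eq_of_reflTransGen_delV_of_mem (h : ReflTransGen (delV G S) a b) (ha : a ∈ S) :
    b = a := by
  rcases h.cases_head with rfl | ⟨_, hac, -⟩
  exacts [rfl, absurd ha hac.2.1]

theorem exists_mem_reflTransGen_delV (h : ReflTransGen (delV G S') a b)
    (hS : ¬ReflTransGen (delV G S) a b) :
    ∃ z ∈ S, ReflTransGen (delV G S') a z ∧ ReflTransGen (delV G S') z b := by
  induction h with
  | refl => exact absurd .refl hS
  | @tail c d hac hcd ih =>
    by_cases hd : d ∈ S
    · exact ⟨d, hd, hac.tail hcd, .refl⟩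
    by_cases hc : c ∈ S
    · exact ⟨c, hc, hac, .single hcd⟩
    by_cases h' : ReflTransGen (delV G S) a c
    · exact absurd (h'.tail ⟨hcd.1, hc, hd⟩) hS
    obtain ⟨z, hz, haz, hzc⟩ := ih h'
    exact ⟨z, hz, haz, hzc.tail hcd⟩

theorem exists_first_mem_reflTransGen_delV (h : ReflTransGen (delV G S') a b)
    (hS : ¬ReflTransGen (delV G S) a b) (ha : a ∉ S) :
    ∃ y, ∃ z ∈ S, ReflTransGen (delV G S) a y ∧ delV G S' y z := by
  induction h using ReflTransGen.head_induction_on with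
  | refl => exact absurd .refl hS
  | @head a c hac hcb ih =>
    by_cases hc : c ∈ S
    · exact ⟨a, c, hc, .refl, hac⟩
    by_cases h' : ReflTransGen (delV G S) c b
    · exact absurd (h'.head ⟨hac.1, ha, hc⟩) hS
    obtain ⟨y, z, hz, hcy, hyz⟩ := ih h' hc
    exact ⟨y, z, hz, hcy.head ⟨hac.1, ha, hc⟩, hyz⟩

theorem reflTransGen_delV_of_forall_notMem
    (hS' : ∀ c, ReflTransGen (delV G S) a c → c ∉ S') (h : ReflTransGen (delV G S) a b) :
    ReflTransGen (delV G S') a b := by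
  induction h with
  | refl => exact .refl
  | @tail c d hac hcd ih => exact ih.tail ⟨hcd.1, hS' c hac, hS' d (hac.tail hcd)⟩

theorem reach_delV_anti (hSS' : S ⊆ S') (a : V) :
    Reach (delV G S') {a} ⊆ Reach (delV G S) {a} :=
  fun _ ⟨x, hx, p, hp⟩ => ⟨x, hx, p, hp.mono (delV_anti hSS')⟩

section Shadows

variable {Vinf T M : Set V} {v : V}

theorem Acyclic.mem_rShadow_iff (hG : Acyclic G) :
    v ∈ rShadow G T M ↔ v ∉ M ∧ ∀ t ∈ T, ¬ReflTransGen (delV G M) v t := by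
  have key : ∀ t, (∀ p, IsPathFrom G v t p → ∃ z ∈ p, z ∈ M) ↔
      ¬(v ∉ M ∧ ReflTransGen (delV G M) v t) := fun t => by
    rw [← hG.exists_isPathFrom_avoiding_iff]; push Not; rfl
  simp only [rShadow, Set.mem_ofPred_eq, key]
  tauto

theorem Acyclic.mem_fShadow_iff (hG : Acyclic G) :
    v ∈ fShadow G T M ↔ v ∉ M ∧ ∀ t ∈ T, ¬ReflTransGen (delV G M) t v := by
  have key : ∀ t, (∀ p, IsPathFrom G t v p → ∃ z ∈ p, z ∈ M) ↔
      ¬(t ∉ M ∧ ReflTransGen (delV G M) t v) := fun t => by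
    rw [← hG.exists_isPathFrom_avoiding_iff]; push Not; rfl
  simp only [fShadow, Set.mem_ofPred_eq, key]
  exact and_congr_right fun hv => forall₂_congr fun t _ =>
    not_congr ⟨And.right, fun h => ⟨notMem_of_reflTransGen_delV_left h hv, h⟩⟩

theorem Acyclic.isSep_singleton_iff (hG : Acyclic G) :
    IsSep G Vinf {v} T S ↔ Disjoint S Vinf ∧ ∀ t ∈ T, ¬ReflTransGen (delV G S) v t := by
  simp [IsSep, (acyclic_delV hG S).exists_isPathFrom_iff]

end Shadows

def outBoundary (G : V → V → Prop) (Z : Set V) : Set V :=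
  {w | w ∉ Z ∧ ∃ x ∈ Z, G x w}

theorem mem_of_reflTransGen_delV_outBoundary {Z : Set V} (ha : a ∈ Z)
    (h : ReflTransGen (delV G (outBoundary G Z)) a b) : b ∈ Z := by
  induction h with
  | refl => exact ha
  | @tail c d _ hcd hc => by_contra hd; exact hcd.2.2 ⟨hd, c, hc, hcd.1⟩

theorem outBoundary_union_subset (Z Z' : Set V) :
    outBoundary G (Z ∪ Z') ⊆ outBoundary G Z ∪ outBoundary G Z' := by
  rintro w ⟨hw, x, hx | hx, hxw⟩
  exacts [.inl ⟨fun h => hw (.inl h), x, hx, hxw⟩, .inr ⟨fun h => hw (.inr h), x, hx, hxw⟩]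

theorem outBoundary_reach_subset (ha : a ∉ S) :
    outBoundary G {b | ReflTransGen (delV G S) a b} ⊆ S := by
  rintro w ⟨hw, x, hx, hxw⟩
  by_contra hwS
  exact hw (hx.tail ⟨hxw, notMem_of_reflTransGen_delV hx ha, hwS⟩)

section Exchange

variable {Vinf T M M' : Set V} {v : V}

/-- Typically `M' = (M \ S₀) ∪ S` for a `v → T` separator `S₀ ⊆ M` and a separator `S` that
reaches further from `v` than `S₀`. -/
structure IsExchange (G : V → V → Prop) (T M M' S : Set V) (v : V) : Prop where
  separates : ∀ t ∈ T, ¬ReflTransGen (delV G S) v t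
  subset : S ⊆ M'
  reach : ∀ z ∈ M \ M', ReflTransGen (delV G S) v z

namespace IsExchange

theorem mem_rShadow (hG : Acyclic G) (h : IsExchange G T M M' S v)
    (hx : ReflTransGen (delV G S) v x) (hxM' : x ∉ M') : x ∈ rShadow G T M' :=
  hG.mem_rShadow_iff.2 ⟨hxM', fun t ht hxt =>
    h.separates t ht (hx.trans (reflTransGen_delV_anti h.subset hxt))⟩

theorem reflTransGen_of_not_reflTransGen (h : IsExchange G T M M' S v) (ha : a ∉ M')
    (hM' : ReflTransGen (delV G M') a b) (hM : ¬ReflTransGen (delV G M) a b) :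
    ReflTransGen (delV G S) v b := by
  obtain ⟨z, hzM, haz, hzb⟩ := exists_mem_reflTransGen_delV hM' hM
  exact (h.reach z ⟨hzM, notMem_of_reflTransGen_delV haz ha⟩).trans
    (reflTransGen_delV_anti h.subset hzb)

theorem oddMWC (h : IsExchange G T M M' S v) (hM : OddMWC G Vinf T M) (hM'V : M' ⊆ Vinfᶜ) :
    OddMWC G Vinf T M' := by
  refine ⟨hM'V, fun t₁ ht₁ t₂ ht₂ p hp hodd => ?_⟩
  by_contra! hpM'
  obtain ⟨z, hzp, hzM⟩ := hM.2 t₁ ht₁ t₂ ht₂ p hp hodd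
  exact h.separates t₂ ht₂ ((h.reach z ⟨hzM, hpM' z hzp⟩).trans
    (reflTransGen_delV_anti h.subset (hp.reflTransGen_delV_of_mem hpM' hzp)))

theorem rShadow_subset (hG : Acyclic G) (h : IsExchange G T M M' S v)
    (hdisj : Disjoint (rShadow G T M) M') : rShadow G T M ⊆ rShadow G T M' := by
  intro u hu
  have huM' : u ∉ M' := Set.disjoint_left.1 hdisj hu
  refine hG.mem_rShadow_iff.2 ⟨huM', fun t ht hut => h.separates t ht ?_⟩
  exact h.reflTransGen_of_not_reflTransGen huM' hut ((hG.mem_rShadow_iff.1 hu).2 t ht)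

theorem shadows_subset (hG : Acyclic G) (h : IsExchange G T M M' S v)
    (hdisj : Disjoint (rShadow G T M) M') :
    rShadow G T M ∪ fShadow G T M ∪ M ⊆ rShadow G T M' ∪ fShadow G T M' ∪ M' := by
  rintro x ((hx | hx) | hx)
  · exact .inl (.inl (h.rShadow_subset hG hdisj hx))
  · by_cases hxM' : x ∈ M'
    · exact .inr hxM'
    by_cases hxf : x ∈ fShadow G T M'
    · exact .inl (.inr hxf)
    obtain ⟨t, ht, htx⟩ : ∃ t ∈ T, ReflTransGen (delV G M') t x := by
      simpa [hG.mem_fShadow_iff, hxM'] using hxf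
    refine .inl (.inl (h.mem_rShadow hG ?_ hxM'))
    exact h.reflTransGen_of_not_reflTransGen (notMem_of_reflTransGen_delV_left htx hxM') htx
      ((hG.mem_fShadow_iff.1 hx).2 t ht)
  · by_cases hxM' : x ∈ M'
    · exact .inr hxM'
    exact .inl (.inl (h.mem_rShadow hG (h.reach x ⟨hx, hxM'⟩) hxM'))

theorem rShadow_ssubset (hG : Acyclic G) (h : IsExchange G T M M' S v)
    (hdisj : Disjoint (rShadow G T M) M') (hne : (M \ M').Nonempty) :
    rShadow G T M ⊂ rShadow G T M' := by
  obtain ⟨w, hwM, hwM'⟩ := hne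
  refine (Set.ssubset_iff_of_subset (h.rShadow_subset hG hdisj)).2
    ⟨w, h.mem_rShadow hG (h.reach w ⟨hwM, hwM'⟩) hwM', fun hw => hw.1 hwM⟩

end IsExchange

end Exchange

section Separators

variable {Vinf T M S₀ S₁ : Set V} {v u : V}

/-- By minimality of `S₀`, some `v → T` walk meets `S₀` only at `z`; its part before `z`
lies in `G - S₀`, hence in `G - S`. -/
theorem IsSep.sdiff_subset_reach (hG : Acyclic G) (hS₀ : IsSep G Vinf {v} T S₀)
    (hS₀min : ∀ S' ⊂ S₀, ¬IsSep G Vinf {v} T S') (hvS₀ : v ∉ S₀) (hvS : v ∉ S)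
    (hreach : Reach (delV G S₀) {v} ⊆ Reach (delV G S) {v}) :
    S₀ \ S ⊆ Reach (delV G S) {v} := by
  simp only [(acyclic_delV hG _).reach_singleton] at hreach ⊢
  rintro z ⟨hz, hzS⟩
  obtain ⟨t, ht, hvt⟩ : ∃ t ∈ T, ReflTransGen (delV G (S₀ \ {z})) v t := by
    simpa [hG.isSep_singleton_iff, hS₀.1.mono_left Set.sdiff_subset] using
      hS₀min _ (Set.sdiff_singleton_ssubset.2 hz)
  obtain ⟨y, z', hz', hvy, hyz'⟩ := exists_first_mem_reflTransGen_delV hvt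
    ((hG.isSep_singleton_iff.1 hS₀).2 t ht) hvS₀
  obtain rfl : z' = z := by by_contra hne; exact hyz'.2.2 ⟨hz', hne⟩
  have hy : ReflTransGen (delV G S) v y := hreach hvy
  exact hy.tail ⟨hyz'.1, notMem_of_reflTransGen_delV hy hvS, hzS⟩

/-- The witness is the out-boundary of everything reachable from `v` in `G - S` or from `u` in
`G - (M ∪ S \ {u})`. -/
theorem exists_isSep_of_mem_rShadow (hG : Acyclic G) (hM : M ⊆ Vinfᶜ) (hvS : v ∉ S)
    (hS : IsSep G Vinf {v} T S) (hu : u ∈ rShadow G T M) :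
    ∃ S₂, IsSep G Vinf {v} T S₂ ∧ Reach (delV G S) {v} ⊆ Reach (delV G S₂) {v} ∧
      S₂ ⊆ (S \ {u}) ∪ (M \ Reach (delV G S) {v}) := by
  simp only [hG.isSep_singleton_iff, (acyclic_delV hG _).reach_singleton] at hS ⊢
  rw [hG.mem_rShadow_iff] at hu
  set Z₁ := {y | ReflTransGen (delV G S) v y}
  set Z₂ := {y | ReflTransGen (delV G (M ∪ (S \ {u}))) u y}
  have hsub : outBoundary G (Z₁ ∪ Z₂) ⊆ (S \ {u}) ∪ (M \ Z₁) := by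
    intro w hw
    have hwu : w ≠ u := fun e => hw.1 (.inr (e ▸ .refl))
    rcases outBoundary_union_subset Z₁ Z₂ hw with hw' | hw'
    · exact .inl ⟨outBoundary_reach_subset hvS hw', hwu⟩
    · rcases outBoundary_reach_subset (by simp [hu.1]) hw' with hwM | hwS
      exacts [.inr ⟨hwM, fun h => hw.1 (.inl h)⟩, .inl hwS]
  refine ⟨outBoundary G (Z₁ ∪ Z₂), ⟨?_, fun t ht hvt => ?_⟩,
    fun y => reflTransGen_delV_of_forall_notMem fun c hc hcB => hcB.1 (.inl hc), hsub⟩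
  · refine Set.disjoint_left.2 fun w hw hwV => ?_
    rcases hsub hw with hwS | hwM
    exacts [Set.disjoint_left.1 hS.1 hwS.1 hwV, hM hwM.1 hwV]
  · rcases mem_of_reflTransGen_delV_outBoundary (.inl .refl) hvt with h | h
    exacts [hS.2 t ht h, hu.2 t ht (reflTransGen_delV_anti Set.subset_union_left h)]

theorem disjoint_rShadow_of_minimal [Finite V] (hG : Acyclic G) (hM : M ⊆ Vinfᶜ) (hvS : v ∉ S)
    (hS : IsSep G Vinf {v} T S) (hcore : S₀ \ S ⊆ Reach (delV G S) {v})
    (hSmin : ∀ S₂, IsSep G Vinf {v} T S₂ → Reach (delV G S) {v} ⊆ Reach (delV G S₂) {v} →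
      (S \ (M \ S₀)).ncard ≤ (S₂ \ (M \ S₀)).ncard) :
    Disjoint (rShadow G T M) S := by
  refine Set.disjoint_right.2 fun u huS hu => ?_
  obtain ⟨S₂, hS₂, hreach, hS₂sub⟩ := exists_isSep_of_mem_rShadow hG hM hvS hS hu
  have hsub : S₂ \ (M \ S₀) ⊆ (S \ (M \ S₀)) \ {u} := by
    rintro w ⟨hw, hwM⟩
    rcases hS₂sub hw with ⟨hwS, hwu⟩ | ⟨hwM', hwR⟩
    · exact ⟨⟨hwS, hwM⟩, hwu⟩
    have hwS₀ : w ∈ S₀ := by_contra fun h => hwM ⟨hwM', h⟩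
    have hwS : w ∈ S := by_contra fun h => hwR (hcore ⟨hwS₀, h⟩)
    exact ⟨⟨hwS, hwM⟩, fun e => hu.1 ((Set.mem_singleton_iff.1 e) ▸ hwM')⟩
  have h₁ := hSmin S₂ hS₂ hreach
  have h₂ := Set.ncard_le_ncard hsub
  have h₃ := Set.ncard_sdiff_singleton_lt_of_mem (s := S \ (M \ S₀)) ⟨huS, fun h => hu.1 h.1⟩
  omega

theorem exists_isExchange [Finite V] (hG : Acyclic G) (hM : M ⊆ Vinfᶜ) (hvS₀ : v ∉ S₀)
    (hS₀M : S₀ ⊆ M) (hS₀ : IsSep G Vinf {v} T S₀) (hS₀min : ∀ S ⊂ S₀, ¬IsSep G Vinf {v} T S)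
    (hS₁ : IsSep G Vinf {v} T S₁) (hS₁card : S₁.ncard ≤ S₀.ncard)
    (hS₁reach : Reach (delV G S₀) {v} ⊂ Reach (delV G S₁) {v}) :
    ∃ M' S, IsExchange G T M M' S v ∧ M' ⊆ Vinfᶜ ∧ M'.ncard ≤ M.ncard ∧ (M \ M').Nonempty ∧
      Disjoint (rShadow G T M) M' := by
  obtain ⟨S, ⟨hS, hreach⟩, hSmin⟩ := Set.exists_min_image
    {S | IsSep G Vinf {v} T S ∧ Reach (delV G S₀) {v} ⊂ Reach (delV G S) {v}}
    (fun S => (S \ (M \ S₀)).ncard) (Set.toFinite _) ⟨S₁, hS₁, hS₁reach⟩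
  have hvS : v ∉ S := fun hvS => by
    obtain ⟨w, hw, hw₀⟩ := Set.exists_of_ssubset hreach
    rw [(acyclic_delV hG _).reach_singleton] at hw hw₀
    exact hw₀ (eq_of_reflTransGen_delV_of_mem hw hvS ▸ .refl)
  have hcore := hS₀.sdiff_subset_reach hG hS₀min hvS₀ hvS hreach.subset
  obtain ⟨w, hwS₀, hwS⟩ : (S₀ \ S).Nonempty := by
    by_contra! h
    exact hreach.not_subset (reach_delV_anti (Set.sdiff_eq_empty.1 h) v)
  have hreachM : ∀ z ∈ M \ ((M \ S₀) ∪ S), ReflTransGen (delV G S) v z := by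
    rintro z ⟨hzM, hzM'⟩
    have hz := hcore ⟨by_contra fun h => hzM' (.inl ⟨hzM, h⟩), fun h => hzM' (.inr h)⟩
    rwa [(acyclic_delV hG _).reach_singleton] at hz
  have hcard : (S \ (M \ S₀)).ncard ≤ S₀.ncard :=
    calc (S \ (M \ S₀)).ncard ≤ (S₁ \ (M \ S₀)).ncard := hSmin S₁ ⟨hS₁, hS₁reach⟩
      _ ≤ S₁.ncard := Set.ncard_le_ncard Set.sdiff_subset
      _ ≤ S₀.ncard := hS₁card
  have hdisj : Disjoint (rShadow G T M) S := disjoint_rShadow_of_minimal hG hM hvS hS hcore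
    fun S₂ h₁ h₂ => hSmin S₂ ⟨h₁, hreach.trans_le h₂⟩
  refine ⟨(M \ S₀) ∪ S, S, ⟨(hG.isSep_singleton_iff.1 hS).2, Set.subset_union_right, hreachM⟩,
    Set.union_subset (Set.sdiff_subset.trans hM) (Set.subset_compl_iff_disjoint_right.2 hS.1),
    ncard_sdiff_union_le hS₀M hcard, ⟨w, hS₀M hwS₀, by simp [hwS₀, hwS]⟩,
    Set.disjoint_union_right.2 ⟨?_, hdisj⟩⟩
  exact Set.disjoint_of_subset_right Set.sdiff_subset (Set.disjoint_left.2 fun _ hu => hu.1)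

end Separators

end

theorem improve_cut_of_no_important_separator {V : Type*} [Fintype V]
    (G : V → V → Prop) (hG : Acyclic G) (Vinf T : Set V)
    (M : Set V) (hM : OddMWC G Vinf T M)
    (v : V) (hv : v ∈ rShadow G T M)
    (hno : ¬ ∃ S, S ⊆ M ∧ ImportantSep G Vinf {v} T S) :
    ∃ M' : Set V, OddMWC G Vinf T M' ∧ M'.ncard ≤ M.ncard ∧
      rShadow G T M ∪ fShadow G T M ∪ M ⊆ rShadow G T M' ∪ fShadow G T M' ∪ M' ∧
      rShadow G T M ⊂ rShadow G T M' := by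
  have hMsep : IsSep G Vinf {v} T M := hG.isSep_singleton_iff.2
    ⟨Set.subset_compl_iff_disjoint_right.1 hM.1, (hG.mem_rShadow_iff.1 hv).2⟩
  obtain ⟨S₀, ⟨hS₀M, hS₀⟩, hS₀min⟩ := Set.exists_min_image {S | S ⊆ M ∧ IsSep G Vinf {v} T S}
    Set.ncard (Set.toFinite _) ⟨M, subset_rfl, hMsep⟩
  have hS₀minimal : ∀ S ⊂ S₀, ¬IsSep G Vinf {v} T S := fun S hS hSsep =>
    (Set.ncard_lt_ncard hS).not_ge (hS₀min S ⟨hS.subset.trans hS₀M, hSsep⟩)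
  obtain ⟨S₁, hS₁, -, -, hS₁card, hS₁reach⟩ :
      ∃ S₁, IsSep G Vinf {v} T S₁ ∧ S₁ ≠ S₀ ∧ Dominates G Vinf {v} T S₁ S₀ := by
    by_contra! h
    exact hno ⟨S₀, hS₀M, hS₀, hS₀minimal, h⟩
  obtain ⟨M', S, hex, hM'V, hcard, hne, hdisj⟩ := exists_isExchange hG hM.1
    (fun h => hv.1 (hS₀M h)) hS₀M hS₀ hS₀minimal hS₁ hS₁card hS₁reach
  exact ⟨M', hex.oddMWC hM hM'V, hcard, hex.shadows_subset hG hdisj,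
    hex.rShadow_ssubset hG hdisj hne⟩
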